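/- arXiv:math/0211253 — 3 statements merged into one kernel-verified Lean document; each statement's English description precedes it below -/
import Mathlib

section
/- Suppose m_i ≥ k for some index i with 1 ≤ i ≤ n. Then the linear map f_{k,m} : V_{k−1} → V_k is injective and the dimension of its cokernel equals C(n+k−2, k). -/
/-! Order the support of `v ∈ V_{k-1}` by the `i`-th exponent and let `J` be a maximal element.
Any `J'` with `J' + 1_{i'} = J + 1_i` and `i' ≠ i` has `J'_i = J_i + 1`, so `e_{J+1_i}` occurs in
`f v` only through `e_J`, with coefficient `(J_i + 1)(m_i - J_i) v_J`; it is nonzero because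
`J_i ≤ k - 1 < m_i`. Hence `f` is injective, and its cokernel has dimension
`C(n+k-1, k) - C(n+k-2, k-1) = C(n+k-2, k)` by Pascal's rule. -/

open Finsupp

/-- Multiindices `J : Fin n → ℕ` of total degree `j`. -/
abbrev MIdx (n j : ℕ) : Type := {J : Fin n → ℕ // ∑ i, J i = j}

/-- The complex vector space `V_j` with basis `{e_J : |J| = j}`. -/
abbrev V (n j : ℕ) : Type := MIdx n j →₀ ℂ

/-- `J + 1ᵢ` : the multiindex `J` with its `i`-th entry increased by 1. -/
def incr {n : ℕ} (J : Fin n → ℕ) (i : Fin n) : Fin n → ℕ :=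
  Function.update J i (J i + 1)

lemma sum_incr {n : ℕ} (J : Fin n → ℕ) (i : Fin n) :
    ∑ x, incr J i x = (∑ x, J x) + 1 := by
  unfold incr
  rw [Finset.sum_update_of_mem (Finset.mem_univ i),
    Finset.sum_eq_sum_sdiff_singleton_add (Finset.mem_univ i) J]
  ring

/-- The map `f_{j+1,m} : V_j → V_{j+1}`, `e_J ↦ ∑ᵢ (jᵢ+1)(mᵢ−jᵢ) e_{J+1ᵢ}`. -/
noncomputable def fMap (n : ℕ) (m : Fin n → ℕ) (j : ℕ) : V n j →ₗ[ℂ] V n (j + 1) :=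
  Finsupp.lift (V n (j + 1)) ℂ (MIdx n j) fun J =>
    ∑ i, (((J.1 i : ℂ) + 1) * ((m i : ℂ) - (J.1 i : ℂ))) •
      Finsupp.single (⟨incr J.1 i, by rw [sum_incr, J.2]⟩ : MIdx n (j + 1)) (1 : ℂ)

/-- `d(m,j)`: the number of multiindices `J` with `J i ≤ m i` for all `i` and `|J| = j`. -/
noncomputable def dCount (n : ℕ) (m : Fin n → ℕ) (j : ℤ) : ℕ :=
  Set.ncard {J : Fin n → ℕ | (∀ i, J i ≤ m i) ∧ ∑ i, (J i : ℤ) = j}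

/-- `w(m,j) = d(m,j) − d(m,j−1)`. -/
noncomputable def w (n : ℕ) (m : Fin n → ℕ) (j : ℤ) : ℤ :=
  (dCount n m j : ℤ) - (dCount n m (j - 1) : ℤ)

noncomputable instance (n j : ℕ) : Fintype (MIdx n j) :=
  Fintype.ofEquiv _ (Sym.equivNatSumOfFintype (Fin n) j)

lemma finrank_V (n j : ℕ) : Module.finrank ℂ (V n j) = (n + j - 1).choose j := by
  rw [Module.finrank_finsupp_self, ← Fintype.card_congr (Sym.equivNatSumOfFintype (Fin n) j),
    Sym.card_sym_eq_multichoose, Fintype.card_fin, Nat.multichoose_eq]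

lemma MIdx.le {n j : ℕ} (J : MIdx n j) (i : Fin n) : J.1 i ≤ j :=
  (Finset.single_le_sum (fun _ _ => Nat.zero_le _) (Finset.mem_univ i)).trans J.2.le

lemma incr_injective {n : ℕ} (i : Fin n) : Function.Injective (incr · i) := by
  intro J J' h
  funext x
  have := congrFun h x
  by_cases hx : x = i
  · subst hx; simpa [incr] using this
  · simpa [incr, hx] using this

lemma eq_of_incr_eq_incr {n : ℕ} {J J' : Fin n → ℕ} {i i' : Fin n} (h : incr J' i' = incr J i)
    (hle : J' i ≤ J i) : i' = i ∧ J' = J := by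
  have hi : i' = i := by
    by_contra hne
    have := congrFun h i
    simp [incr, Ne.symm hne] at this
    omega
  subst hi
  exact ⟨rfl, incr_injective i' h⟩

lemma fMap_apply_incr_of_forall_le {n : ℕ} (m : Fin n → ℕ) {j : ℕ} (v : V n j)
    (J : MIdx n j) (i : Fin n) (hmax : ∀ J' ∈ v.support, J'.1 i ≤ J.1 i) :
    fMap n m j v ⟨incr J.1 i, by rw [sum_incr, J.2]⟩ =
      ((J.1 i + 1) * (m i - J.1 i) : ℂ) * v J := by
  simp only [fMap, Finsupp.lift_apply, Finsupp.sum, Finsupp.finsetSum_apply, Finsupp.smul_apply,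
    Finsupp.single_apply, Subtype.mk.injEq, smul_eq_mul, mul_ite, mul_one, mul_zero]
  rw [Finset.sum_eq_single J]
  · rw [Finset.sum_eq_single i, if_pos rfl, mul_comm]
    · exact fun i' _ hi' => if_neg fun h => hi' (eq_of_incr_eq_incr h le_rfl).1
    · exact fun hi => absurd (Finset.mem_univ i) hi
  · refine fun J' hJ' hne => mul_eq_zero_of_right _ (Finset.sum_eq_zero fun i' _ => if_neg ?_)
    exact fun h => hne (Subtype.ext (eq_of_incr_eq_incr h (hmax J' hJ')).2)
  · intro hJ
    rw [Finsupp.notMem_support_iff.mp hJ, zero_mul]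

lemma fMap_injective {n : ℕ} (m : Fin n → ℕ) {j : ℕ} {i : Fin n} (hm : j < m i) :
    Function.Injective (fMap n m j) := by
  rw [← LinearMap.ker_eq_bot, LinearMap.ker_eq_bot']
  intro v hv
  by_contra hv0
  obtain ⟨J, hJ, hmax⟩ := v.support.exists_max_image (fun J => J.1 i)
    (Finsupp.support_nonempty_iff.mpr hv0)
  have hcoeff : ((J.1 i + 1) * (m i - J.1 i) : ℂ) ≠ 0 := by
    have : (J.1 i : ℂ) ≠ m i := by exact_mod_cast (J.le i).trans_lt hm |>.ne
    exact mul_ne_zero (Nat.cast_add_one_ne_zero _) (sub_ne_zero.mpr this.symm)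
  have := fMap_apply_incr_of_forall_le m v J i hmax
  rw [hv, Finsupp.zero_apply, eq_comm, mul_eq_zero] at this
  exact this.elim hcoeff (Finsupp.mem_support_iff.mp hJ)

theorem injective_coker_of_big_weight_general (n k : ℕ) (hk : 1 ≤ k) (m : Fin n → ℕ)
    (h : ∃ i, k ≤ m i) :
    Function.Injective (fMap n m (k - 1)) ∧
    Module.finrank ℂ (V n (k - 1 + 1) ⧸ LinearMap.range (fMap n m (k - 1)))
      = Nat.choose (n + k - 2) k := by
  obtain ⟨i, hi⟩ := h
  have hinj : Function.Injective (fMap n m (k - 1)) := fMap_injective m (i := i) (by omega)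
  refine ⟨hinj, ?_⟩
  obtain ⟨a, rfl⟩ : ∃ a, k = a + 1 := ⟨k - 1, by omega⟩
  have hn : 1 ≤ n := i.pos
  rw [Submodule.finrank_quotient, LinearMap.finrank_range_of_inj hinj, finrank_V, finrank_V,
    Nat.add_sub_cancel, show n + (a + 1) - 1 = n + a - 1 + 1 by omega,
    show n + (a + 1) - 2 = n + a - 1 by omega,
    Nat.choose_succ_succ', Nat.add_sub_cancel_left]

/-- If `m_i ≥ k` for some `i`, then `f_{k,m} : V_{k−1} → V_k` is injective and
`dim coker f_{k,m} = C(n+k−2, k)`. -/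
theorem injective_coker_of_big_weight (n k : ℕ) (hn : 1 ≤ n) (hk : 1 ≤ k) (m : Fin n → ℕ)
    (h : ∃ i, k ≤ m i) :
    Function.Injective (fMap n m (k - 1)) ∧
    Module.finrank ℂ (V n (k - 1 + 1) ⧸ LinearMap.range (fMap n m (k - 1)))
      = Nat.choose (n + k - 2) k :=
  injective_coker_of_big_weight_general n k hk m h
end

section
/- Suppose 0 ≤ |m| − k + 1 < k. Then the dimension of the kernel of the linear map g_{k,m} : W_{k−1} → W_k equals w(m, |m| − k + 1). -/
/-!
The raising operator `e` and the lowering operator `g` satisfy `e g - g e = |m| - 2j`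
on `W_j`. As `W_j = 0` for `j > |m|`, a downward induction shows that `e g` has no eigenvector with
negative eigenvalue on `W_j` once all the weights `|m| - 2i`, `i > j`, are nonpositive. Hence on
`W_k` with `2k > |m|` the operator `g e = e g - (|m| - 2k)` is injective, so bijective, and
`g : W_{k-1} → W_k` is onto. Rank–nullity then gives `dim ker g = d(m, k-1) - d(m, k)`, which is
`w(m, |m| - k + 1)` by the symmetry `d(m, j) = d(m, |m| - j)` coming from `J ↦ m - J`.
-/

open Finsupp

/-- Multiindices of degree `j` bounded by `m`. -/
abbrev WIdx (n : ℕ) (m : Fin n → ℕ) (j : ℕ) : Type :=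
  {J : Fin n → ℕ // (∑ i, J i = j) ∧ ∀ i, J i ≤ m i}

/-- The weight space `W_j` of `L_{m_1} ⊗ ⋯ ⊗ L_{m_n}`, with basis
`{e_J : |J| = j, J i ≤ m i}`. -/
abbrev W (n : ℕ) (m : Fin n → ℕ) (j : ℕ) : Type := WIdx n m j →₀ ℂ

/-- The map `g_{j+1,m} : W_j → W_{j+1}`, `e_J ↦ ∑_{i : jᵢ < mᵢ} e_{J+1ᵢ}`. -/
noncomputable def gMap (n : ℕ) (m : Fin n → ℕ) (j : ℕ) : W n m j →ₗ[ℂ] W n m (j + 1) :=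
  Finsupp.lift (W n m (j + 1)) ℂ (WIdx n m j) fun J =>
    ∑ i, if h : J.1 i < m i then
      Finsupp.single (⟨incr J.1 i, by
        refine ⟨by rw [sum_incr, J.2.1], fun x => ?_⟩
        unfold incr
        rcases eq_or_ne x i with rfl | hx
        · simpa using h
        · rw [Function.update_of_ne hx]
          exact J.2.2 x⟩ : WIdx n m (j + 1)) (1 : ℂ)
    else 0

section Sl2Relation

variable {K : Type*} [Field K] [CharZero K] {M : ℕ → Type*} [∀ j, AddCommGroup (M j)]
  [∀ j, Module K (M j)] {F : ∀ j, M j →ₗ[K] M (j + 1)} {E : ∀ j, M (j + 1) →ₗ[K] M j}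
  {c : ℕ → ℤ}

theorem eq_zero_of_raise_lower_eq_smul
    (hrel : ∀ j x, E (j + 1) (F (j + 1) x) - F j (E j x) = (c (j + 1) : K) • x)
    {N j : ℕ} (hjN : j ≤ N) (hN : Subsingleton (M N)) (hc : ∀ i, j < i → c i ≤ 0)
    {q : ℤ} (hq : q < 0) {x : M j} (hx : E j (F j x) = (q : K) • x) : x = 0 := by
  induction hjN using Nat.decreasingInduction generalizing q with
  | self => exact Subsingleton.elim _ _
  | of_succ j hjN ih =>
    have hFx : E (j + 1) (F (j + 1) (F j x)) = ((q + c (j + 1) : ℤ) : K) • F j x := by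
      rw [sub_eq_iff_eq_add.mp (hrel j (F j x)), hx, map_smul, Int.cast_add, add_smul]
      exact add_comm _ _
    have hFx0 : F j x = 0 :=
      ih (fun i hi => hc i (by omega)) (by linarith [hc (j + 1) (by omega)]) hFx
    have hq0 : (q : K) ≠ 0 := Int.cast_ne_zero.mpr hq.ne
    rw [hFx0, map_zero] at hx
    exact (smul_eq_zero.mp hx.symm).resolve_left hq0

theorem surjective_of_raise_lower_sub
    (hrel : ∀ j x, E (j + 1) (F (j + 1) x) - F j (E j x) = (c (j + 1) : K) • x)
    {N j : ℕ} [FiniteDimensional K (M (j + 1))] (hjN : j + 1 ≤ N) (hN : Subsingleton (M N))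
    (hc : ∀ i, j < i → c i < 0) : Function.Surjective (F j) := by
  have hinj : Function.Injective (F j ∘ₗ E j) := by
    rw [← LinearMap.ker_eq_bot, LinearMap.ker_eq_bot']
    intro x hx
    rw [LinearMap.comp_apply] at hx
    refine eq_zero_of_raise_lower_eq_smul hrel hjN hN (fun i hi => (hc i (by omega)).le)
      (hc (j + 1) (by omega)) ?_
    simpa [hx] using hrel j x
  have hsurj := LinearMap.injective_iff_surjective.mp hinj
  rw [LinearMap.coe_comp] at hsurj
  exact hsurj.of_comp

end Sl2Relation

def decr {n : ℕ} (J : Fin n → ℕ) (i : Fin n) : Fin n → ℕ :=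
  Function.update J i (J i - 1)

section MultiIndex

variable {n : ℕ}

@[simp] lemma incr_self (J : Fin n → ℕ) (i : Fin n) : incr J i i = J i + 1 := by
  simp [incr]

@[simp] lemma decr_self (J : Fin n → ℕ) (i : Fin n) : decr J i i = J i - 1 := by
  simp [decr]

lemma incr_of_ne (J : Fin n → ℕ) {i l : Fin n} (h : l ≠ i) : incr J i l = J l :=
  Function.update_of_ne h _ _

lemma decr_of_ne (J : Fin n → ℕ) {i l : Fin n} (h : l ≠ i) : decr J i l = J l :=
  Function.update_of_ne h _ _

@[simp] lemma decr_incr (J : Fin n → ℕ) (i : Fin n) : decr (incr J i) i = J := by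
  simp [incr, decr]

lemma incr_decr (J : Fin n → ℕ) {i : Fin n} (h : 0 < J i) : incr (decr J i) i = J := by
  simp [incr, decr, Nat.sub_add_cancel h]

lemma decr_incr_comm (J : Fin n → ℕ) {i l : Fin n} (h : i ≠ l) :
    decr (incr J i) l = incr (decr J l) i := by
  simp only [incr, decr, Function.update_of_ne h, Function.update_of_ne h.symm,
    Function.update_comm h]

lemma sum_decr (J : Fin n → ℕ) {i : Fin n} (h : 0 < J i) : ∑ x, decr J i x = (∑ x, J x) - 1 := by
  rw [← incr_decr J h, sum_incr, decr_incr, Nat.add_sub_cancel]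

lemma decr_le (J : Fin n → ℕ) (i : Fin n) : decr J i ≤ J := by
  simp [decr]

end MultiIndex

section Ambient

variable {n : ℕ} (m : Fin n → ℕ)

noncomputable def lowerAt (i : Fin n) : ((Fin n → ℕ) →₀ ℂ) →ₗ[ℂ] (Fin n → ℕ) →₀ ℂ :=
  Finsupp.lift _ ℂ _ fun J => if J i < m i then single (incr J i) 1 else 0

/-- In the basis `f^j v` of `L_m`, `e (f^j v) = j (m - j + 1) f^(j-1) v`. -/
noncomputable def raiseAt (i : Fin n) : ((Fin n → ℕ) →₀ ℂ) →ₗ[ℂ] (Fin n → ℕ) →₀ ℂ :=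
  Finsupp.lift _ ℂ _ fun K => ((K i : ℂ) * (m i - K i + 1)) • single (decr K i) 1

@[simp] lemma lowerAt_single (i : Fin n) (J : Fin n → ℕ) :
    lowerAt m i (single J 1) = if J i < m i then single (incr J i) 1 else 0 := by
  simp [lowerAt]

@[simp] lemma raiseAt_single (i : Fin n) (K : Fin n → ℕ) :
    raiseAt m i (single K 1) = ((K i : ℂ) * (m i - K i + 1)) • single (decr K i) 1 := by
  simp [raiseAt]

lemma raiseAt_comp_lowerAt {i l : Fin n} (h : i ≠ l) :
    raiseAt m i ∘ₗ lowerAt m l = lowerAt m l ∘ₗ raiseAt m i := by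
  ext J : 2
  simp only [LinearMap.comp_apply, Finsupp.lsingle_apply, lowerAt_single, raiseAt_single,
    apply_ite (raiseAt m i), map_zero, map_smul, incr_of_ne J h, decr_of_ne J h.symm,
    decr_incr_comm J h.symm, smul_ite, smul_zero]

lemma raiseAt_lowerAt_single {i : Fin n} {J : Fin n → ℕ} (hJ : J i ≤ m i) :
    raiseAt m i (lowerAt m i (single J 1)) = ((J i + 1 : ℂ) * (m i - J i)) • single J 1 := by
  rcases hJ.lt_or_eq with hlt | heq
  · rw [lowerAt_single, if_pos hlt, raiseAt_single, decr_incr, incr_self]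
    congr 1
    push_cast
    ring
  · rw [lowerAt_single, if_neg heq.not_lt, map_zero, heq, sub_self, mul_zero, zero_smul]

lemma lowerAt_raiseAt_single {i : Fin n} {J : Fin n → ℕ} (hJ : J i ≤ m i) :
    lowerAt m i (raiseAt m i (single J 1)) = ((J i : ℂ) * (m i - J i + 1)) • single J 1 := by
  rcases Nat.eq_zero_or_pos (J i) with h0 | hpos
  · rw [raiseAt_single, h0, Nat.cast_zero, zero_mul, zero_smul, map_zero, zero_smul]
  · rw [raiseAt_single, map_smul, lowerAt_single, decr_self, if_pos (by omega), incr_decr J hpos]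

lemma raise_lower_sub_lower_raise_single {J : Fin n → ℕ} (hJ : ∀ i, J i ≤ m i) :
    (∑ i, raiseAt m i) ((∑ i, lowerAt m i) (single J 1))
        - (∑ i, lowerAt m i) ((∑ i, raiseAt m i) (single J 1))
      = (∑ i, ((m i : ℂ) - 2 * J i)) • single J 1 := by
  simp only [LinearMap.sum_apply, map_sum]
  rw [Finset.sum_comm (f := fun l i => raiseAt m i (lowerAt m l (single J 1))),
    ← Finset.sum_sub_distrib, Finset.sum_smul]
  refine Finset.sum_congr rfl fun i _ => ?_
  rw [← Finset.sum_sub_distrib, Finset.sum_eq_single i]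
  · rw [raiseAt_lowerAt_single m (hJ i), lowerAt_raiseAt_single m (hJ i), ← sub_smul]
    congr 1
    ring
  · intro l _ hli
    rw [← LinearMap.comp_apply, raiseAt_comp_lowerAt m hli.symm, LinearMap.comp_apply, sub_self]
  · simp

end Ambient

section Weight

variable {n : ℕ} {m : Fin n → ℕ}

def WIdx.decr {j : ℕ} (K : WIdx n m (j + 1)) (i : Fin n) (h : 0 < K.1 i) : WIdx n m j :=
  ⟨_root_.decr K.1 i, by rw [sum_decr _ h, K.2.1, Nat.add_sub_cancel],
    fun x => (decr_le K.1 i x).trans (K.2.2 x)⟩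

variable (n m) in
noncomputable def raiseMap (j : ℕ) : W n m (j + 1) →ₗ[ℂ] W n m j :=
  Finsupp.lift (W n m j) ℂ (WIdx n m (j + 1)) fun K =>
    ∑ i, if h : 0 < K.1 i then ((K.1 i : ℂ) * (m i - K.1 i + 1)) • single (K.decr i h) 1 else 0

variable (n m) in
noncomputable def embW (j : ℕ) : W n m j →ₗ[ℂ] (Fin n → ℕ) →₀ ℂ :=
  Finsupp.lmapDomain ℂ ℂ Subtype.val

lemma embW_injective (j : ℕ) : Function.Injective (embW n m j) :=
  Finsupp.mapDomain_injective Subtype.val_injective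

@[simp] lemma embW_single {j : ℕ} (J : WIdx n m j) (c : ℂ) :
    embW n m j (single J c) = single J.1 c := by
  simp [embW]

lemma embW_gMap {j : ℕ} (x : W n m j) :
    embW n m (j + 1) (gMap n m j x) = (∑ i, lowerAt m i) (embW n m j x) := by
  suffices embW n m (j + 1) ∘ₗ gMap n m j = (∑ i, lowerAt m i) ∘ₗ embW n m j from
    LinearMap.congr_fun this x
  ext J : 2
  simp [gMap, apply_dite]

lemma embW_raiseMap {j : ℕ} (x : W n m (j + 1)) :
    embW n m j (raiseMap n m j x) = (∑ i, raiseAt m i) (embW n m (j + 1) x) := by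
  suffices embW n m j ∘ₗ raiseMap n m j = (∑ i, raiseAt m i) ∘ₗ embW n m (j + 1) from
    LinearMap.congr_fun this x
  ext K : 2
  simp only [raiseMap, LinearMap.comp_apply, Finsupp.lsingle_apply, Finsupp.lift_apply,
    Finsupp.sum_single_index, zero_smul, one_smul, map_sum, embW_single, LinearMap.sum_apply,
    raiseAt_single]
  refine Finset.sum_congr rfl fun i _ => ?_
  split_ifs with h
  · rw [map_smul, embW_single]
    rfl
  · rw [Nat.eq_zero_of_not_pos h, Nat.cast_zero, zero_mul, zero_smul, map_zero]

lemma raiseMap_gMap_sub {j : ℕ} (x : W n m (j + 1)) :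
    raiseMap n m (j + 1) (gMap n m (j + 1) x) - gMap n m j (raiseMap n m j x)
      = (((∑ i, m i : ℕ) - 2 * (j + 1 : ℕ) : ℤ) : ℂ) • x := by
  suffices raiseMap n m (j + 1) ∘ₗ gMap n m (j + 1) - gMap n m j ∘ₗ raiseMap n m j
      = (((∑ i, m i : ℕ) - 2 * (j + 1 : ℕ) : ℤ) : ℂ) • LinearMap.id from
    LinearMap.congr_fun this x
  ext K : 2
  apply embW_injective
  simp only [LinearMap.sub_apply, LinearMap.comp_apply, LinearMap.smul_apply, LinearMap.id_apply,
    Finsupp.lsingle_apply, map_sub, map_smul, embW_gMap, embW_raiseMap, embW_single]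
  rw [raise_lower_sub_lower_raise_single m K.2.2, Finset.sum_sub_distrib, ← Finset.mul_sum]
  have hK : ∑ i, (K.1 i : ℂ) = (j + 1 : ℕ) := by exact_mod_cast K.2.1
  push_cast [hK]
  rfl

end Weight

section Dimension

variable (n : ℕ) (m : Fin n → ℕ)

instance (j : ℕ) : Finite (WIdx n m j) :=
  Finite.of_injective (fun J : WIdx n m j => (⟨J.1, J.2.2⟩ : {J : Fin n → ℕ // J ≤ m}))
    fun _ _ h => Subtype.ext (Subtype.mk.inj h)

lemma isEmpty_WIdx {j : ℕ} (hj : ∑ i, m i < j) : IsEmpty (WIdx n m j) :=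
  ⟨fun J => hj.not_ge (J.2.1 ▸ Finset.sum_le_sum fun i _ => J.2.2 i)⟩

lemma gMap_surjective {j : ℕ} (hj : ∑ i, m i < 2 * (j + 1)) :
    Function.Surjective (gMap n m j) := by
  have := isEmpty_WIdx n m (j := ∑ i, m i + j + 1) (by omega)
  exact surjective_of_raise_lower_sub (E := raiseMap n m) (N := ∑ i, m i + j + 1)
    (c := fun i => ((∑ i, m i : ℕ) : ℤ) - 2 * (i : ℤ)) (fun _ x => raiseMap_gMap_sub x)
    (by omega) inferInstance fun i hi => by omega

lemma finrank_W (j : ℕ) : Module.finrank ℂ (W n m j) = dCount n m j := by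
  have := Fintype.ofFinite (WIdx n m j)
  rw [Module.finrank_finsupp_self, ← Nat.card_eq_fintype_card, dCount, ← Nat.card_coe_set_eq]
  exact Nat.card_congr (Equiv.subtypeEquivRight fun J => by
    simp only [Set.mem_ofPred_eq, ← Nat.cast_sum, Nat.cast_inj, and_comm])

lemma dCount_sum_sub (j : ℤ) : dCount n m (∑ i, (m i : ℤ) - j) = dCount n m j := by
  have hsum {J : Fin n → ℕ} (hJ : ∀ i, J i ≤ m i) :
      ∑ i, ((m i - J i : ℕ) : ℤ) = ∑ i, (m i : ℤ) - ∑ i, (J i : ℤ) := by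
    simp [Nat.cast_sub (hJ _), Finset.sum_sub_distrib]
  refine (Set.ncard_congr (fun J _ i => m i - J i) ?_ ?_ ?_).symm
  · rintro J ⟨hJ, hJsum⟩
    exact ⟨fun i => Nat.sub_le _ _, by rw [hsum hJ, hJsum]⟩
  · rintro J K ⟨hJ, -⟩ ⟨hK, -⟩ h
    funext i
    have := congrFun h i
    have := hJ i
    have := hK i
    omega
  · rintro K ⟨hK, hKsum⟩
    refine ⟨fun i => m i - K i, ⟨fun i => Nat.sub_le _ _, by rw [hsum hK, hKsum]; ring⟩, ?_⟩
    funext i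
    exact Nat.sub_sub_self (hK i)

end Dimension

theorem kernel_dim_resonant_irreducible_general (n k : ℕ) (m : Fin n → ℕ)
    (h1 : (∑ i, (m i : ℤ)) - k + 1 < k) :
    (Module.finrank ℂ (LinearMap.ker (gMap n m (k - 1))) : ℤ)
      = w n m ((∑ i, (m i : ℤ)) - k + 1) := by
  have hm : 0 ≤ ∑ i, (m i : ℤ) := by positivity
  obtain ⟨j, rfl⟩ : ∃ j, k = j + 1 := ⟨k - 1, by omega⟩
  have hsurj : Function.Surjective (gMap n m j) :=
    gMap_surjective n m (by rw [← Nat.cast_sum] at h1; omega)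
  have hrank := LinearMap.finrank_range_add_finrank_ker (gMap n m j)
  rw [LinearMap.range_eq_top.mpr hsurj, finrank_top, finrank_W, finrank_W] at hrank
  rw [Nat.add_sub_cancel, w,
    show ∑ i, (m i : ℤ) - (j + 1 : ℕ) + 1 = ∑ i, (m i : ℤ) - j by push_cast; ring,
    show ∑ i, (m i : ℤ) - j - 1 = ∑ i, (m i : ℤ) - (j + 1 : ℕ) by push_cast; ring,
    dCount_sum_sub, dCount_sum_sub]
  omega

/-- If `0 ≤ |m| − k + 1 < k`, then `dim ker (g_{k,m} : W_{k−1} → W_k) = w(m, |m| − k + 1)`. -/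
theorem kernel_dim_resonant_irreducible (n k : ℕ) (hn : 1 ≤ n) (hk : 1 ≤ k) (m : Fin n → ℕ)
    (h0 : 0 ≤ (∑ i, (m i : ℤ)) - k + 1) (h1 : (∑ i, (m i : ℤ)) - k + 1 < k) :
    (Module.finrank ℂ (LinearMap.ker (gMap n m (k - 1))) : ℤ)
      = w n m ((∑ i, (m i : ℤ)) - k + 1) :=
  kernel_dim_resonant_irreducible_general n k m h1
end

section
/- Suppose n ≥ 2 and 0 ≤ m_1 < k, and set p = k − m_1. Then dim ker f_{k,m} ≤ Σ_{q=p}^{k} dim ker f_{q,m^1}, where for each q the map f_{q,m^1} : V'_{q−1} → V'_q is the analogous map built from the (n−1)-tuple m^1 = (m_2,…,m_n). -/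
open Finsupp

/-!
Write a multiindex of length `n + 1` as `(a, T)` with `a` its first entry; the `a`-slice of
`x ∈ V_j` is its component `x_a ∈ V'_{j-a}` on the multiindices with first entry `a`. In slices
`f = f_{·,m}` is block bidiagonal: `(f x)_{a+1} = c_a x_a + f'(x_{a+1})` and `(f x)_0 = f'(x_0)`,
where `c_a = (a + 1)(m_1 - a)` and `f'` is the map built from `m^1`. For `x ∈ ker f` this reads
`f'(x_{a+1}) = -c_a x_a`, so `m_1 + 1` successive maps `f'` carry `x_{m_1}` down to `f'(x_0) = 0`.
Since `c_a ≠ 0` for `a ≠ m_1`, a downward induction on `a` shows that `x ↦ x_{m_1}` is injective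
on `ker f`. Hence `dim ker f_{k,m}` is at most the kernel dimension of the composite
`f'_k ∘ ⋯ ∘ f'_{k-m_1}`, which is at most `∑_q dim ker f'_q` by subadditivity of kernel
dimensions under composition.
-/

section LinearAlgebra

variable {K U W X : Type*} [Field K] [AddCommGroup U] [Module K U] [AddCommGroup W] [Module K W]
  [AddCommGroup X] [Module K X]

theorem LinearMap.finrank_ker_comp_le [FiniteDimensional K U] [FiniteDimensional K W]
    (g : W →ₗ[K] X) (f : U →ₗ[K] W) :
    Module.finrank K (LinearMap.ker (g ∘ₗ f)) ≤
      Module.finrank K (LinearMap.ker f) + Module.finrank K (LinearMap.ker g) := by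
  let r : LinearMap.ker (g ∘ₗ f) →ₗ[K] LinearMap.ker g :=
    f.restrict fun x hx => by simpa using hx
  have hker : Module.finrank K (LinearMap.ker r) = Module.finrank K (LinearMap.ker f) := by
    rw [LinearMap.ker_restrict]
    exact (Submodule.comapSubtypeEquivOfLe (LinearMap.ker_le_ker_comp f g)).finrank_eq
  have hrange := Submodule.finrank_le (LinearMap.range r)
  have := r.finrank_range_add_finrank_ker
  omega

end LinearAlgebra

section Chain

variable {K : Type*} [Field K] {W : ℕ → Type*} [∀ i, AddCommGroup (W i)] [∀ i, Module K (W i)]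

def chainComp (g : ∀ i, W i →ₗ[K] W (i + 1)) (e : ℕ) : ∀ t, W e →ₗ[K] W (e + t)
  | 0 => LinearMap.id
  | t + 1 => g (e + t) ∘ₗ chainComp g e t

theorem finrank_ker_chainComp_le [∀ i, FiniteDimensional K (W i)]
    (g : ∀ i, W i →ₗ[K] W (i + 1)) (e t : ℕ) :
    Module.finrank K (LinearMap.ker (chainComp g e t)) ≤
      ∑ s ∈ Finset.range t, Module.finrank K (LinearMap.ker (g (e + s))) := by
  induction t with
  | zero =>
    simp only [chainComp, LinearMap.ker_id, Finset.range_zero, Finset.sum_empty]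
    exact (finrank_bot K (W e)).le
  | succ t ih =>
    rw [Finset.sum_range_succ]
    exact (LinearMap.finrank_ker_comp_le _ _).trans (by omega)

end Chain

namespace MIdx

instance finite (n j : ℕ) : Finite (MIdx n j) := by
  have : {J : Fin n → ℕ | ∑ i, J i = j} = ↑(Finset.Nat.antidiagonalTuple n j) := by
    ext J; simp [Finset.Nat.mem_antidiagonalTuple]
  exact Set.finite_coe_iff.mpr (this ▸ Finset.finite_toSet _ :)

variable {n d j : ℕ}

def cons (a : ℕ) (h : a + d = j) (T : MIdx n d) : MIdx (n + 1) j :=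
  ⟨Fin.cons a T.1, by rw [Fin.sum_cons, T.2, h]⟩

theorem cons_injective (a : ℕ) (h : a + d = j) : Function.Injective (cons (n := n) a h) :=
  fun _ _ hST =>
    Subtype.ext (Fin.cons_right_injective (α := fun _ => ℕ) a (congrArg Subtype.val hST))

theorem head_cons (a : ℕ) (h : a + d = j) (T : MIdx n d) : (cons a h T).1 0 = a := rfl

theorem exists_eq_cons (J : MIdx (n + 1) j) :
    ∃ (a d : ℕ) (h : a + d = j) (T : MIdx n d), J = cons a h T := by
  have hsum := J.2
  rw [Fin.sum_univ_succ] at hsum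
  exact ⟨J.1 0, _, hsum, ⟨Fin.tail J.1, rfl⟩, Subtype.ext (Fin.cons_self_tail J.1).symm⟩

def incr (J : MIdx n d) (i : Fin n) : MIdx n (d + 1) :=
  ⟨_root_.incr J.1 i, by rw [sum_incr, J.2]⟩

theorem incr_cons_zero (a : ℕ) (h : a + d = j) (h' : a + 1 + d = j + 1) (T : MIdx n d) :
    (cons a h T).incr 0 = cons (a + 1) h' T :=
  Subtype.ext <| by simp only [MIdx.incr, _root_.incr, cons, Fin.cons_zero, Fin.update_cons_zero]

theorem incr_cons_succ (a : ℕ) (h : a + d = j) (h' : a + (d + 1) = j + 1) (T : MIdx n d)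
    (i : Fin n) : (cons a h T).incr i.succ = cons a h' (T.incr i) :=
  Subtype.ext <| by simp only [MIdx.incr, _root_.incr, cons, Fin.cons_succ, ← Fin.cons_update]

end MIdx

open MIdx

section Slices

variable {n d j : ℕ}

/- The tail degree `d` is fixed by a proof of `a + d = j` rather than written `j - a`, so that
slices of different `V`'s can be compared without casts. -/
noncomputable def slice (a : ℕ) (h : a + d = j) : V (n + 1) j →ₗ[ℂ] V n d :=
  Finsupp.lcomapDomain (cons a h) (cons_injective a h)

theorem slice_single_cons (a : ℕ) (h : a + d = j) (T : MIdx n d) (c : ℂ) :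
    slice a h (single (cons a h T) c) = single T c :=
  Finsupp.comapDomain_single _ _ _ _

theorem slice_single_cons_of_ne {a b d' : ℕ} (hab : a ≠ b) (h : a + d = j) (h' : b + d' = j)
    (T : MIdx n d) (c : ℂ) : slice b h' (single (cons a h T) c) = 0 := by
  ext T'
  exact Finsupp.single_eq_of_ne fun hT => hab (congrArg (·.1 0) hT).symm

theorem slice_eq_zero_of_eq {a a' d' : ℕ} (ha : a = a') (h : a + d = j) (h' : a' + d' = j)
    {x : V (n + 1) j} (hx : slice a h x = 0) : slice a' h' x = 0 := by
  subst ha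
  obtain rfl : d = d' := by omega
  exact hx

theorem eq_zero_of_forall_slice_eq_zero {x : V (n + 1) j}
    (hx : ∀ a d (h : a + d = j), slice a h x = 0) : x = 0 := by
  ext J
  obtain ⟨a, d, h, T, rfl⟩ := exists_eq_cons J
  exact DFunLike.congr_fun (hx a d h) T

def fCoeff (mi a : ℕ) : ℂ := ((a : ℂ) + 1) * ((mi : ℂ) - a)

theorem fCoeff_ne_zero {mi a : ℕ} (h : a ≠ mi) : fCoeff mi a ≠ 0 :=
  mul_ne_zero (Nat.cast_add_one_ne_zero a) (sub_ne_zero.mpr (Nat.cast_injective.ne h.symm))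

theorem fMap_single (m : Fin n → ℕ) (J : MIdx n d) :
    fMap n m d (single J 1) = ∑ i, fCoeff (m i) (J.1 i) • single (J.incr i) 1 := by
  simp only [fMap, lift_apply, zero_smul, sum_single_index, one_smul]
  rfl

noncomputable def fMapHead (m : Fin (n + 1) → ℕ) (j : ℕ) :
    V (n + 1) j →ₗ[ℂ] V (n + 1) (j + 1) :=
  Finsupp.lift _ ℂ _ fun J => fCoeff (m 0) (J.1 0) • single (J.incr 0) 1

noncomputable def fMapTail (m : Fin (n + 1) → ℕ) (j : ℕ) :
    V (n + 1) j →ₗ[ℂ] V (n + 1) (j + 1) :=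
  Finsupp.lift _ ℂ _ fun J =>
    ∑ i : Fin n, fCoeff (m i.succ) (J.1 i.succ) • single (J.incr i.succ) 1

theorem fMapHead_single (m : Fin (n + 1) → ℕ) (J : MIdx (n + 1) j) :
    fMapHead m j (single J 1) = fCoeff (m 0) (J.1 0) • single (J.incr 0) 1 := by
  simp only [fMapHead, lift_apply, zero_smul, sum_single_index, one_smul]

theorem fMapTail_single (m : Fin (n + 1) → ℕ) (J : MIdx (n + 1) j) :
    fMapTail m j (single J 1) =
      ∑ i : Fin n, fCoeff (m i.succ) (J.1 i.succ) • single (J.incr i.succ) 1 := by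
  simp only [fMapTail, lift_apply, zero_smul, sum_single_index, one_smul]

theorem fMap_eq_fMapHead_add_fMapTail (m : Fin (n + 1) → ℕ) (j : ℕ) :
    fMap (n + 1) m j = fMapHead m j + fMapTail m j := by
  ext J : 2
  simp only [LinearMap.comp_apply, Finsupp.lsingle_apply, LinearMap.add_apply, fMap_single,
    Fin.sum_univ_succ, fMapHead_single, fMapTail_single]

theorem slice_succ_comp_fMapHead (m : Fin (n + 1) → ℕ) (b : ℕ) (h : b + 1 + d = j + 1)
    (h' : b + d = j) : slice (b + 1) h ∘ₗ fMapHead m j = fCoeff (m 0) b • slice b h' := by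
  ext J : 2
  obtain ⟨a, e, hJ, T, rfl⟩ := exists_eq_cons J
  simp only [LinearMap.comp_apply, LinearMap.smul_apply, Finsupp.lsingle_apply, fMapHead_single,
    head_cons, incr_cons_zero a hJ (by omega : a + 1 + e = j + 1), map_smul]
  rcases eq_or_ne a b with rfl | hab
  · obtain rfl : e = d := by omega
    rw [slice_single_cons, slice_single_cons]
  · rw [slice_single_cons_of_ne (by omega), slice_single_cons_of_ne hab, smul_zero, smul_zero]

theorem slice_zero_comp_fMapHead (m : Fin (n + 1) → ℕ) (h : 0 + d = j + 1) :
    slice 0 h ∘ₗ fMapHead m j = 0 := by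
  ext J : 2
  obtain ⟨a, e, hJ, T, rfl⟩ := exists_eq_cons J
  simp only [LinearMap.comp_apply, LinearMap.zero_apply, Finsupp.lsingle_apply, fMapHead_single,
    incr_cons_zero a hJ (by omega : a + 1 + e = j + 1), map_smul,
    slice_single_cons_of_ne (Nat.succ_ne_zero a), smul_zero]

theorem slice_comp_fMapTail (m : Fin (n + 1) → ℕ) (a : ℕ) (h : a + (d + 1) = j + 1)
    (h' : a + d = j) : slice a h ∘ₗ fMapTail m j = fMap n (Fin.tail m) d ∘ₗ slice a h' := by
  ext J : 2
  obtain ⟨b, e, hJ, T, rfl⟩ := exists_eq_cons J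
  simp only [LinearMap.comp_apply, Finsupp.lsingle_apply, fMapTail_single,
    incr_cons_succ b hJ (by omega : b + (e + 1) = j + 1), map_sum, map_smul]
  rcases eq_or_ne b a with rfl | hab
  · obtain rfl : e = d := by omega
    simp only [slice_single_cons, fMap_single]
    rfl
  · simp only [slice_single_cons_of_ne hab, smul_zero, Finset.sum_const_zero, map_zero]

theorem slice_comp_fMapTail_of_add_zero (m : Fin (n + 1) → ℕ) (a : ℕ) (h : a + 0 = j + 1) :
    slice a h ∘ₗ fMapTail m j = 0 := by
  ext J : 2
  obtain ⟨b, e, hJ, T, rfl⟩ := exists_eq_cons J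
  simp only [LinearMap.comp_apply, LinearMap.zero_apply, Finsupp.lsingle_apply, fMapTail_single,
    incr_cons_succ b hJ (by omega : b + (e + 1) = j + 1), map_sum, map_smul,
    slice_single_cons_of_ne (by omega : b ≠ a), smul_zero, Finset.sum_const_zero]

theorem slice_fMap (m : Fin (n + 1) → ℕ) (a : ℕ) (h : a + d = j + 1) (x : V (n + 1) j) :
    slice a h (fMap (n + 1) m j x) =
      (slice a h ∘ₗ fMapHead m j) x + (slice a h ∘ₗ fMapTail m j) x := by
  rw [fMap_eq_fMapHead_add_fMapTail, LinearMap.add_apply, map_add]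
  rfl

section Kernel

variable {m : Fin (n + 1) → ℕ} {x : V (n + 1) j}

theorem fMap_slice_zero_of_mem_ker (hx : fMap (n + 1) m j x = 0) (h : 0 + d = j) :
    fMap n (Fin.tail m) d (slice 0 h x) = 0 := by
  have h' : 0 + (d + 1) = j + 1 := by omega
  have := slice_fMap m 0 h' x
  rwa [hx, map_zero, slice_zero_comp_fMapHead, slice_comp_fMapTail m 0 h' h,
    LinearMap.zero_apply, zero_add, eq_comm] at this

theorem fMap_slice_succ_of_mem_ker (hx : fMap (n + 1) m j x = 0) (b : ℕ) (h : b + 1 + d = j)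
    (h' : b + (d + 1) = j) :
    fMap n (Fin.tail m) d (slice (b + 1) h x) = -(fCoeff (m 0) b • slice b h' x) := by
  have h₁ : b + 1 + (d + 1) = j + 1 := by omega
  have := slice_fMap m (b + 1) h₁ x
  rw [hx, map_zero, slice_succ_comp_fMapHead m b h₁ h', slice_comp_fMapTail m (b + 1) h₁ h,
    eq_comm] at this
  exact eq_neg_of_add_eq_zero_right this

theorem fCoeff_smul_slice_of_mem_ker (hx : fMap (n + 1) m j x = 0) (a : ℕ) (h : a + 0 = j) :
    fCoeff (m 0) a • slice a h x = 0 := by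
  have h₁ : a + 1 + 0 = j + 1 := by omega
  have := slice_fMap m (a + 1) h₁ x
  rwa [hx, map_zero, slice_succ_comp_fMapHead m a h₁ h, slice_comp_fMapTail_of_add_zero,
    LinearMap.zero_apply, add_zero, eq_comm] at this

theorem exists_chainComp_slice_eq_smul_slice (hx : fMap (n + 1) m j x = 0) {e : ℕ}
    (h₀ : m 0 + e = j) :
    ∀ t a, a + t = m 0 → ∀ h : a + (e + t) = j,
      ∃ c : ℂ, chainComp (fMap n (Fin.tail m)) e t (slice (m 0) h₀ x) = c • slice a h x := by
  intro t
  induction t with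
  | zero =>
    intro a ha h
    subst ha
    exact ⟨1, (one_smul ℂ _).symm⟩
  | succ t ih =>
    intro a ha h
    have h₁ : a + 1 + (e + t) = j := by omega
    obtain ⟨c, hc⟩ := ih (a + 1) (by omega) h₁
    refine ⟨-(c * fCoeff (m 0) a), ?_⟩
    change fMap n (Fin.tail m) (e + t) (chainComp _ e t _) = _
    rw [hc, map_smul, fMap_slice_succ_of_mem_ker hx a h₁ h, smul_neg, smul_smul, neg_smul]

theorem chainComp_slice_eq_zero_of_mem_ker (hx : fMap (n + 1) m j x = 0) {e : ℕ}
    (h₀ : m 0 + e = j) :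
    chainComp (fMap n (Fin.tail m)) e (m 0 + 1) (slice (m 0) h₀ x) = 0 := by
  obtain ⟨c, hc⟩ := exists_chainComp_slice_eq_smul_slice hx h₀ (m 0) 0 (zero_add _) (by omega)
  change fMap n (Fin.tail m) (e + m 0) (chainComp _ e (m 0) _) = 0
  rw [hc, map_smul, fMap_slice_zero_of_mem_ker hx, smul_zero]

theorem eq_zero_of_mem_ker_of_slice_eq_zero (hx : fMap (n + 1) m j x = 0) {e : ℕ}
    (h₀ : m 0 + e = j) (hslice : slice (m 0) h₀ x = 0) : x = 0 := by
  refine eq_zero_of_forall_slice_eq_zero fun a d h => ?_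
  induction d generalizing a with
  | zero =>
    by_cases ha : a = m 0
    · exact slice_eq_zero_of_eq ha.symm h₀ h hslice
    · exact (smul_eq_zero.mp (fCoeff_smul_slice_of_mem_ker hx a h)).resolve_left
        (fCoeff_ne_zero ha)
  | succ d ih =>
    by_cases ha : a = m 0
    · exact slice_eq_zero_of_eq ha.symm h₀ h hslice
    · have h₁ : a + 1 + d = j := by omega
      have := fMap_slice_succ_of_mem_ker hx a h₁ h
      rw [ih (a + 1) h₁, map_zero, zero_eq_neg] at this
      exact (smul_eq_zero.mp this).resolve_left (fCoeff_ne_zero ha)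

end Kernel

theorem finrank_ker_fMap_le_finrank_ker_chainComp (m : Fin (n + 1) → ℕ) {e : ℕ}
    (h₀ : m 0 + e = j) :
    Module.finrank ℂ (LinearMap.ker (fMap (n + 1) m j)) ≤
      Module.finrank ℂ (LinearMap.ker (chainComp (fMap n (Fin.tail m)) e (m 0 + 1))) := by
  let r := (slice (m 0) h₀).restrict fun x hx =>
    LinearMap.mem_ker.mpr (chainComp_slice_eq_zero_of_mem_ker (LinearMap.mem_ker.mp hx) h₀)
  refine LinearMap.finrank_le_finrank_of_injective (f := r) fun x y hxy => Subtype.ext ?_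
  have hsub : fMap (n + 1) m j (x.1 - y.1) = 0 := LinearMap.mem_ker.mp (sub_mem x.2 y.2)
  have hslice : slice (m 0) h₀ (x.1 - y.1) = 0 := by
    rw [map_sub, sub_eq_zero]
    exact congrArg Subtype.val hxy
  exact sub_eq_zero.mp (eq_zero_of_mem_ker_of_slice_eq_zero hsub h₀ hslice)

end Slices

theorem kernel_dim_le_sum_tail_general (n k : ℕ) (m : Fin (n + 1) → ℕ) (hm : m 0 < k) :
    Module.finrank ℂ (LinearMap.ker (fMap (n + 1) m (k - 1)))
      ≤ ∑ q ∈ Finset.Icc (k - m 0) k,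
          Module.finrank ℂ (LinearMap.ker (fMap n (Fin.tail m) (q - 1))) := by
  obtain ⟨j, rfl⟩ : ∃ j, k = j + 1 := ⟨k - 1, by omega⟩
  calc Module.finrank ℂ (LinearMap.ker (fMap (n + 1) m j))
      ≤ Module.finrank ℂ (LinearMap.ker (chainComp (fMap n (Fin.tail m)) (j - m 0) (m 0 + 1))) :=
        finrank_ker_fMap_le_finrank_ker_chainComp m (by omega)
    _ ≤ ∑ s ∈ Finset.range (m 0 + 1),
          Module.finrank ℂ (LinearMap.ker (fMap n (Fin.tail m) (j - m 0 + s))) :=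
        finrank_ker_chainComp_le _ _ _
    _ = _ := by
      rw [← Finset.Ico_add_one_right_eq_Icc, Finset.sum_Ico_eq_sum_range,
        show j + 1 + 1 - (j + 1 - m 0) = m 0 + 1 by omega]
      exact Finset.sum_congr rfl fun s _ => by
        rw [show j + 1 - m 0 + s - 1 = j - m 0 + s by omega]

/-- If `0 ≤ m_1 < k` and `p = k − m_1`, then
`dim ker f_{k,m} ≤ ∑_{q=p}^{k} dim ker f_{q,m^1}`, where `m^1 = (m_2,…,m_n)`. -/
theorem kernel_dim_le_sum_tail (n k : ℕ) (hn : 1 ≤ n) (hk : 1 ≤ k)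
    (m : Fin (n + 1) → ℕ) (hm : m 0 < k) :
    Module.finrank ℂ (LinearMap.ker (fMap (n + 1) m (k - 1)))
      ≤ ∑ q ∈ Finset.Icc (k - m 0) k,
          Module.finrank ℂ (LinearMap.ker (fMap n (Fin.tail m) (q - 1))) :=
  kernel_dim_le_sum_tail_general n k m hm
end
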